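/- A function I : [0,1]² → [0,1] is a (D,N)-implication I(x,y) = D(N(x),y) for some continuous fuzzy negation N and some fuzzy disjunction D with right neutral element 0 (i.e., D(x,0) = x for all x) if and only if I is a fuzzy implication, the map N_I(x) = I(x,0) is a continuous fuzzy negation, and whenever N_I(x₁) = N_I(x₂) for some x₁, x₂ ∈ [0,1], then I(x₁,y) = I(x₂,y) for all y ∈ [0,1]. Moreover, in that case the pair (D,N) is unique. -/
import Mathlib


open Set

def unitI : Set ℝ := Set.Icc 0 1

/-- A fuzzy conjunction on [0,1]. -/
def IsFuzzyConj (C : ℝ → ℝ → ℝ) : Prop :=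
  (∀ x ∈ unitI, ∀ y ∈ unitI, C x y ∈ unitI) ∧
  (∀ y ∈ unitI, ∀ x₁ ∈ unitI, ∀ x₂ ∈ unitI, x₁ ≤ x₂ → C x₁ y ≤ C x₂ y) ∧
  (∀ x ∈ unitI, ∀ y₁ ∈ unitI, ∀ y₂ ∈ unitI, y₁ ≤ y₂ → C x y₁ ≤ C x y₂) ∧
  C 1 1 = 1 ∧ C 0 0 = 0 ∧ C 1 0 = 0 ∧ C 0 1 = 0

/-- A fuzzy disjunction on [0,1]. -/
def IsFuzzyDisj (D : ℝ → ℝ → ℝ) : Prop :=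
  (∀ x ∈ unitI, ∀ y ∈ unitI, D x y ∈ unitI) ∧
  (∀ y ∈ unitI, ∀ x₁ ∈ unitI, ∀ x₂ ∈ unitI, x₁ ≤ x₂ → D x₁ y ≤ D x₂ y) ∧
  (∀ x ∈ unitI, ∀ y₁ ∈ unitI, ∀ y₂ ∈ unitI, y₁ ≤ y₂ → D x y₁ ≤ D x y₂) ∧
  D 0 0 = 0 ∧ D 1 1 = 1 ∧ D 1 0 = 1 ∧ D 0 1 = 1

/-- A fuzzy negation on [0,1]. -/
def IsFuzzyNeg (N : ℝ → ℝ) : Prop :=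
  (∀ x ∈ unitI, N x ∈ unitI) ∧ N 0 = 1 ∧ N 1 = 0 ∧
  (∀ x ∈ unitI, ∀ y ∈ unitI, x ≤ y → N y ≤ N x)

/-- A fuzzy implication on [0,1]. -/
def IsFuzzyImpl (I : ℝ → ℝ → ℝ) : Prop :=
  (∀ x ∈ unitI, ∀ y ∈ unitI, I x y ∈ unitI) ∧
  (∀ y ∈ unitI, ∀ x₁ ∈ unitI, ∀ x₂ ∈ unitI, x₁ ≤ x₂ → I x₂ y ≤ I x₁ y) ∧
  (∀ x ∈ unitI, ∀ y₁ ∈ unitI, ∀ y₂ ∈ unitI, y₁ ≤ y₂ → I x y₁ ≤ I x y₂) ∧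
  I 0 0 = 1 ∧ I 1 1 = 1 ∧ I 1 0 = 0

/-- The natural negation of a fuzzy conjunction. -/
noncomputable def natNegC (C : ℝ → ℝ → ℝ) (x : ℝ) : ℝ :=
  sSup {t | t ∈ unitI ∧ C x t = 0}

/-- The natural negation of a fuzzy disjunction. -/
noncomputable def natNegD (D : ℝ → ℝ → ℝ) (x : ℝ) : ℝ :=
  sInf {t | t ∈ unitI ∧ D x t = 1}

lemma mem_unitI {x : ℝ} : x ∈ unitI ↔ 0 ≤ x ∧ x ≤ 1 := Set.mem_Icc

lemma zero_mem_unitI : (0:ℝ) ∈ unitI := by simp [unitI]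

lemma one_mem_unitI : (1:ℝ) ∈ unitI := by simp [unitI]

/-- Surjectivity of a continuous fuzzy negation onto `[N a, 1]` from `[0, a]`. -/
lemma neg_surj {N : ℝ → ℝ} (hN : IsFuzzyNeg N) (hc : ContinuousOn N unitI)
    {a t : ℝ} (ha : a ∈ unitI) (ht1 : N a ≤ t) (ht2 : t ≤ 1) :
    ∃ z, z ∈ Set.Icc 0 a ∧ N z = t := by
  have hsub : Set.Icc (0:ℝ) a ⊆ unitI := Set.Icc_subset_Icc le_rfl ha.2
  have h := intermediate_value_Icc' ha.1 (hc.mono hsub)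
  have ht : t ∈ Set.Icc (N a) (N 0) := by rw [hN.2.1]; exact ⟨ht1, ht2⟩
  obtain ⟨z, hz, hzt⟩ := h ht
  exact ⟨z, hz, hzt⟩

open Classical in
/-- Candidate disjunction constructed from an implication. -/
noncomputable def Dmk (I : ℝ → ℝ → ℝ) (x y : ℝ) : ℝ :=
  if h : ∃ z, z ∈ unitI ∧ I z 0 = x then I h.choose y else y

theorem stmt_17 (I : ℝ → ℝ → ℝ) :
    ((∃ D N, IsFuzzyDisj D ∧ IsFuzzyNeg N ∧ ContinuousOn N unitI ∧
        (∀ x ∈ unitI, D x 0 = x) ∧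
        ∀ x ∈ unitI, ∀ y ∈ unitI, I x y = D (N x) y) ↔
      (IsFuzzyImpl I ∧ IsFuzzyNeg (fun x => I x 0) ∧
        ContinuousOn (fun x => I x 0) unitI ∧
        ∀ x₁ ∈ unitI, ∀ x₂ ∈ unitI, I x₁ 0 = I x₂ 0 →
          ∀ y ∈ unitI, I x₁ y = I x₂ y)) ∧
    (∀ D₁ N₁ D₂ N₂ : _,
      (IsFuzzyDisj D₁ ∧ IsFuzzyNeg N₁ ∧ ContinuousOn N₁ unitI ∧
        (∀ x ∈ unitI, D₁ x 0 = x) ∧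
        ∀ x ∈ unitI, ∀ y ∈ unitI, I x y = D₁ (N₁ x) y) →
      (IsFuzzyDisj D₂ ∧ IsFuzzyNeg N₂ ∧ ContinuousOn N₂ unitI ∧
        (∀ x ∈ unitI, D₂ x 0 = x) ∧
        ∀ x ∈ unitI, ∀ y ∈ unitI, I x y = D₂ (N₂ x) y) →
      (Set.EqOn N₁ N₂ unitI ∧
        ∀ x ∈ unitI, ∀ y ∈ unitI, D₁ x y = D₂ x y)) := by
  -- common fact: any representation satisfies I x 0 = N x on unitI
  have natneg : ∀ (D N : ℝ → ℝ → ℝ → ℝ → Prop), True := fun _ _ => trivial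
  clear natneg
  have Neq : ∀ (D : ℝ → ℝ → ℝ) (N : ℝ → ℝ), IsFuzzyNeg N →
      (∀ x ∈ unitI, D x 0 = x) →
      (∀ x ∈ unitI, ∀ y ∈ unitI, I x y = D (N x) y) →
      ∀ x ∈ unitI, I x 0 = N x := by
    intro D N hN hD0 hrep x hx
    rw [hrep x hx 0 zero_mem_unitI, hD0 (N x) (hN.1 x hx)]
  constructor
  · constructor
    · -- forward direction
      rintro ⟨D, N, hD, hN, hcN, hD0, hrep⟩
      obtain ⟨hDr, hDm1, hDm2, hD00, hD11, hD10, hD01⟩ := hD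
      obtain ⟨hNr, hN0, hN1, hNa⟩ := hN
      have hNeq := Neq D N ⟨hNr, hN0, hN1, hNa⟩ hD0 hrep
      have hImpl : IsFuzzyImpl I := by
        refine ⟨?_, ?_, ?_, ?_, ?_, ?_⟩
        · intro x hx y hy; rw [hrep x hx y hy]; exact hDr _ (hNr x hx) y hy
        · intro y hy x₁ hx₁ x₂ hx₂ hle
          rw [hrep x₁ hx₁ y hy, hrep x₂ hx₂ y hy]
          exact hDm1 y hy _ (hNr x₂ hx₂) _ (hNr x₁ hx₁) (hNa x₁ hx₁ x₂ hx₂ hle)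
        · intro x hx y₁ hy₁ y₂ hy₂ hle
          rw [hrep x hx y₁ hy₁, hrep x hx y₂ hy₂]
          exact hDm2 _ (hNr x hx) y₁ hy₁ y₂ hy₂ hle
        · rw [hrep 0 zero_mem_unitI 0 zero_mem_unitI, hN0, hD10]
        · rw [hrep 1 one_mem_unitI 1 one_mem_unitI, hN1, hD01]
        · rw [hrep 1 one_mem_unitI 0 zero_mem_unitI, hN1, hD00]
      refine ⟨hImpl, ?_, ?_, ?_⟩
      · refine ⟨fun x hx => ?_, ?_, ?_, fun x hx y hy hle => ?_⟩
        · simp only; rw [hNeq x hx]; exact hNr x hx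
        · simp only; rw [hNeq 0 zero_mem_unitI, hN0]
        · simp only; rw [hNeq 1 one_mem_unitI, hN1]
        · simp only; rw [hNeq x hx, hNeq y hy]; exact hNa x hx y hy hle
      · exact hcN.congr hNeq
      · intro x₁ hx₁ x₂ hx₂ heq y hy
        have : N x₁ = N x₂ := by rw [← hNeq x₁ hx₁, ← hNeq x₂ hx₂, heq]
        rw [hrep x₁ hx₁ y hy, hrep x₂ hx₂ y hy, this]
    · -- backward direction
      rintro ⟨hImpl, hN, hcN, hcong⟩
      obtain ⟨hIr, hIa, hIm, hI00, hI11, hI10⟩ := hImpl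
      -- surjectivity of x ↦ I x 0
      have hsurj : ∀ t ∈ unitI, ∃ z, z ∈ unitI ∧ I z 0 = t := by
        intro t ht
        have h1 : I 1 0 ≤ t := by rw [hI10]; exact ht.1
        obtain ⟨z, hz, hzt⟩ := neg_surj hN hcN one_mem_unitI h1 ht.2
        exact ⟨z, hz, hzt⟩
      -- key: Dmk agrees with I z y for any witness z
      have key : ∀ x, (∃ z, z ∈ unitI ∧ I z 0 = x) →
          ∀ z ∈ unitI, I z 0 = x → ∀ y ∈ unitI, Dmk I x y = I z y := by
        intro x h z hz hzx y hy
        rw [Dmk, dif_pos h]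
        exact hcong h.choose h.choose_spec.1 z hz (by rw [h.choose_spec.2, hzx]) y hy
      refine ⟨Dmk I, fun x => I x 0, ?_, hN, hcN, ?_, ?_⟩
      · refine ⟨?_, ?_, ?_, ?_, ?_, ?_, ?_⟩
        · intro x hx y hy
          obtain ⟨z, hz, hzx⟩ := hsurj x hx
          rw [key x ⟨z, hz, hzx⟩ z hz hzx y hy]
          exact hIr z hz y hy
        · intro y hy x₁ hx₁ x₂ hx₂ hle
          obtain ⟨z₁, hz₁, hz₁x⟩ := hsurj x₁ hx₁
          have h1 : I z₁ 0 ≤ x₂ := by rw [hz₁x]; exact hle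
          obtain ⟨z₂, hz₂, hz₂x⟩ := neg_surj hN hcN hz₁ h1 hx₂.2
          have hz₂' : z₂ ∈ unitI := ⟨hz₂.1, le_trans hz₂.2 hz₁.2⟩
          rw [key x₁ ⟨z₁, hz₁, hz₁x⟩ z₁ hz₁ hz₁x y hy,
              key x₂ ⟨z₂, hz₂', hz₂x⟩ z₂ hz₂' hz₂x y hy]
          exact hIa y hy z₂ hz₂' z₁ hz₁ hz₂.2
        · intro x hx y₁ hy₁ y₂ hy₂ hle
          obtain ⟨z, hz, hzx⟩ := hsurj x hx
          rw [key x ⟨z, hz, hzx⟩ z hz hzx y₁ hy₁, key x ⟨z, hz, hzx⟩ z hz hzx y₂ hy₂]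
          exact hIm z hz y₁ hy₁ y₂ hy₂ hle
        · rw [key 0 ⟨1, one_mem_unitI, hI10⟩ 1 one_mem_unitI hI10 0 zero_mem_unitI, hI10]
        · rw [key 1 ⟨0, zero_mem_unitI, hI00⟩ 0 zero_mem_unitI hI00 1 one_mem_unitI]
          have h1 := hIm 0 zero_mem_unitI 0 zero_mem_unitI 1 one_mem_unitI zero_le_one
          rw [hI00] at h1
          exact le_antisymm (hIr 0 zero_mem_unitI 1 one_mem_unitI).2 h1
        · rw [key 1 ⟨0, zero_mem_unitI, hI00⟩ 0 zero_mem_unitI hI00 0 zero_mem_unitI, hI00]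
        · rw [key 0 ⟨1, one_mem_unitI, hI10⟩ 1 one_mem_unitI hI10 1 one_mem_unitI, hI11]
      · intro x hx
        obtain ⟨z, hz, hzx⟩ := hsurj x hx
        rw [key x ⟨z, hz, hzx⟩ z hz hzx 0 zero_mem_unitI, hzx]
      · intro x hx y hy
        exact (key (I x 0) ⟨x, hx, rfl⟩ x hx rfl y hy).symm
  · -- uniqueness
    rintro D₁ N₁ D₂ N₂ ⟨hD₁, hN₁, hcN₁, hD₁0, hrep₁⟩ ⟨hD₂, hN₂, hcN₂, hD₂0, hrep₂⟩
    have hNeq₁ := Neq D₁ N₁ hN₁ hD₁0 hrep₁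
    have hNeq₂ := Neq D₂ N₂ hN₂ hD₂0 hrep₂
    have hNN : ∀ x ∈ unitI, N₁ x = N₂ x := fun x hx => by
      rw [← hNeq₁ x hx, hNeq₂ x hx]
    refine ⟨hNN, ?_⟩
    intro x hx y hy
    have h1 : N₁ 1 ≤ x := by rw [hN₁.2.2.1]; exact hx.1
    obtain ⟨z, hz, hzx⟩ := neg_surj hN₁ hcN₁ one_mem_unitI h1 hx.2
    have hzx₂ : N₂ z = x := by rw [← hNN z hz, hzx]
    rw [← hzx, ← hrep₁ z hz y hy, hzx, ← hzx₂, ← hrep₂ z hz y hy]
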